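/- arXiv:1312.4135 — 3 statements merged into one kernel-verified Lean document; each statement's English description precedes it below -/
import Mathlib

section
/- If G is a graph (2-uniform hypergraph) on n vertices whose largest clique has order l, then the maximum of λ(G,x) = Σ_{ij ∈ E(G)} x_i x_j over all nonnegative weight vectors x with Σ x_i = 1 equals (1/2)(1 - 1/l). -/
/-!
Through two non-adjacent vertices `i, j`, the Lagrangian is affine along the line
`x + t (e_i - e_j)`, because no edge contains both. Hence one of the two ends of the segment that
stays in the simplex (all the weight of `j` moved onto `i`, or vice versa) does not decrease it and
has a smaller support. Iterating, `λ(x) ≤ λ(y)` for some `y` supported on a clique of order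
`k ≤ l`, and then `2 λ(y) ≤ (Σ y_i)² - Σ y_i² ≤ 1 - 1/k` by Cauchy–Schwarz. The uniform weight on a
maximum clique attains the bound.
-/

open Finset

variable {α R : Type*} [DecidableEq α]

def lagrangian [CommSemiring R] (E : Finset (Finset α)) (x : α → R) : R :=
  ∑ e ∈ E, ∏ i ∈ e, x i

def IsClique (E : Finset (Finset α)) (s : Finset α) : Prop :=
  ∀ i ∈ s, ∀ j ∈ s, i ≠ j → ({i, j} : Finset α) ∈ E

theorem eq_pair_of_card_eq_two {e : Finset α} {i j : α} (he : #e = 2) (hi : i ∈ e) (hj : j ∈ e)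
    (hij : i ≠ j) : e = {i, j} :=
  (eq_of_subset_of_card_le (insert_subset hi (singleton_subset_iff.2 hj))
    (by rw [he, card_pair hij])).symm

theorem sum_offDiag_mul [CommRing R] (s : Finset α) (f : α → R) :
    ∑ p ∈ s.offDiag, f p.1 * f p.2 = (∑ i ∈ s, f i) ^ 2 - ∑ i ∈ s, f i ^ 2 := by
  rw [sq, sum_mul_sum, ← sum_product', ← diag_union_offDiag,
    sum_union (disjoint_diag_offDiag s), sum_diag]
  simp only [sq, add_sub_cancel_left]

theorem two_mul_lagrangian_le [Fintype α] {E : Finset (Finset α)} (hE : ∀ e ∈ E, #e = 2)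
    {x : α → ℝ} (hx : ∀ i, 0 ≤ x i) :
    2 * lagrangian E x ≤ (∑ i, x i) ^ 2 - ∑ i, x i ^ 2 := by
  have hedge : ∀ e ∈ E, 2 * ∏ i ∈ e, x i = ∑ p ∈ e.offDiag, x p.1 * x p.2 := by
    intro e he
    obtain ⟨a, b, hab, rfl⟩ := card_eq_two.1 (hE e he)
    rw [sum_offDiag_mul, sum_pair hab, sum_pair hab, prod_pair hab]
    ring
  have hdisj : (E : Set (Finset α)).PairwiseDisjoint offDiag := by
    intro e he e' he' hne
    refine disjoint_left.2 fun p hp hp' => hne ?_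
    rw [mem_offDiag] at hp hp'
    rw [eq_pair_of_card_eq_two (hE e he) hp.1 hp.2.1 hp.2.2,
      eq_pair_of_card_eq_two (hE e' he') hp'.1 hp'.2.1 hp'.2.2]
  calc 2 * lagrangian E x = ∑ p ∈ E.biUnion offDiag, x p.1 * x p.2 := by
        rw [lagrangian, mul_sum, sum_biUnion hdisj]
        exact sum_congr rfl hedge
    _ ≤ ∑ p ∈ univ.offDiag, x p.1 * x p.2 :=
        sum_le_sum_of_subset_of_nonneg (biUnion_subset.2 fun e _ => offDiag_mono (subset_univ e))
          fun p _ _ => mul_nonneg (hx _) (hx _)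
    _ = _ := sum_offDiag_mul _ _

theorem lagrangian_le_of_card_support_le [Fintype α] {E : Finset (Finset α)}
    (hE : ∀ e ∈ E, #e = 2) {x : α → ℝ} (hx : x ∈ stdSimplex ℝ α) {l : ℕ}
    (hl : #{i | x i ≠ 0} ≤ l) :
    lagrangian E x ≤ 1 / 2 * (1 - 1 / l) := by
  set T : Finset α := {i | x i ≠ 0}
  have hT : ∑ i ∈ T, x i = 1 := by rw [sum_filter_ne_zero]; exact hx.2
  have hT2 : ∑ i ∈ T, x i ^ 2 = ∑ i, x i ^ 2 :=
    sum_filter_of_ne fun i _ h => by simpa using h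
  have hTpos : (0 : ℝ) < #T := by
    exact_mod_cast card_pos.2 (nonempty_of_sum_ne_zero (hT ▸ one_ne_zero))
  have hcs : 1 ≤ (#T : ℝ) * ∑ i, x i ^ 2 := by
    simpa [hT, hT2] using sq_sum_le_card_mul_sum_sq (s := T) (f := x)
  have hsq : 1 / (l : ℝ) ≤ ∑ i, x i ^ 2 := calc
    1 / (l : ℝ) ≤ 1 / #T := one_div_le_one_div_of_le hTpos (by exact_mod_cast hl)
    _ ≤ _ := by rw [div_le_iff₀ hTpos]; linarith
  have h2 := two_mul_lagrangian_le hE hx.1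
  rw [hx.2] at h2
  linarith

theorem prod_add_mul_eq [CommRing R] {e : Finset α} {x d : α → R}
    (hd : ∀ a ∈ e, ∀ b ∈ e, d a ≠ 0 → d b ≠ 0 → a = b) (t : R) :
    ∏ k ∈ e, (x k + t * d k) = ∏ k ∈ e, x k + t * (∏ k ∈ e, (x k + d k) - ∏ k ∈ e, x k) := by
  have hconst : ∀ f ⊆ e, (∀ k ∈ f, d k = 0) → ∀ s : R,
      ∏ k ∈ f, (x k + s * d k) = ∏ k ∈ f, x k := fun f _ hf s =>
    prod_congr rfl fun k hk => by rw [hf k hk, mul_zero, add_zero]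
  by_cases h : ∃ m ∈ e, d m ≠ 0
  · obtain ⟨m, hm, hdm⟩ := h
    have hrest : ∀ k ∈ e.erase m, d k = 0 := fun k hk => by
      by_contra hdk
      exact ne_of_mem_erase hk (hd k (mem_of_mem_erase hk) m hm hdk hdm)
    have h1 := hconst _ (erase_subset m e) hrest 1
    simp only [one_mul] at h1
    rw [← mul_prod_erase e (fun k => x k + t * d k) hm, ← mul_prod_erase e (fun k => x k + d k) hm,
      ← mul_prod_erase e x hm, hconst _ (erase_subset m e) hrest t, h1]
    ring
  · push Not at h
    have h1 := hconst e subset_rfl h 1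
    simp only [one_mul] at h1
    rw [hconst e subset_rfl h t, h1, sub_self, mul_zero, add_zero]

theorem lagrangian_add_smul [CommRing R] {E : Finset (Finset α)} {x d : α → R}
    (hd : ∀ e ∈ E, ∀ a ∈ e, ∀ b ∈ e, d a ≠ 0 → d b ≠ 0 → a = b) (t : R) :
    lagrangian E (x + t • d) = lagrangian E x + t * (lagrangian E (x + d) - lagrangian E x) := by
  simp only [lagrangian, Pi.add_apply, Pi.smul_apply, smul_eq_mul]
  rw [sum_congr rfl fun e he => prod_add_mul_eq (hd e he) t, sum_add_distrib, ← mul_sum,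
    sum_sub_distrib]

def transfer [Ring R] (x : α → R) (i j : α) : α → R :=
  x + x j • (Pi.single i 1 - Pi.single j 1)

theorem transfer_mem_stdSimplex [Fintype α] {x : α → ℝ} (hx : x ∈ stdSimplex ℝ α) (i j : α) :
    transfer x i j ∈ stdSimplex ℝ α := by
  refine ⟨fun k => ?_, ?_⟩
  · have := hx.1 k
    have := hx.1 j
    simp only [transfer, Pi.add_apply, Pi.smul_apply, Pi.sub_apply, smul_eq_mul, Pi.single_apply]
    split_ifs <;> subst_vars <;> linarith
  · simp [transfer, sum_add_distrib, ← mul_sum, sum_sub_distrib, hx.2]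

theorem support_transfer_ssubset [Fintype α] {x : α → ℝ} {i j : α} (hi : x i ≠ 0) (hj : x j ≠ 0)
    (hij : i ≠ j) : ({k | transfer x i j k ≠ 0} : Finset α) ⊂ ({k | x k ≠ 0} : Finset α) := by
  refine (ssubset_iff_of_subset fun k hk => ?_).2 ⟨j, by simpa using hj, by simp [transfer, Pi.single_apply, hij.symm]⟩
  simp only [mem_filter, mem_univ, true_and] at hk ⊢
  rcases eq_or_ne k i with rfl | hki
  · exact hi
  rcases eq_or_ne k j with rfl | hkj
  · exact hj
  simpa [transfer, hki, hkj] using hk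

theorem exists_support_ssubset_lagrangian_le [Fintype α] {E : Finset (Finset α)}
    (hE : ∀ e ∈ E, #e = 2) {x : α → ℝ} (hx : x ∈ stdSimplex ℝ α) {i j : α}
    (hi : x i ≠ 0) (hj : x j ≠ 0) (hij : i ≠ j) (hnij : ({i, j} : Finset α) ∉ E) :
    ∃ y ∈ stdSimplex ℝ α, ({k | y k ≠ 0} : Finset α) ⊂ ({k | x k ≠ 0} : Finset α) ∧
      lagrangian E x ≤ lagrangian E y := by
  set d : α → ℝ := Pi.single i 1 - Pi.single j 1
  have hd : ∀ e ∈ E, ∀ a ∈ e, ∀ b ∈ e, d a ≠ 0 → d b ≠ 0 → a = b := by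
    have hdij : ∀ a, d a ≠ 0 → a = i ∨ a = j := fun a ha => by
      by_contra h
      push Not at h
      simp [d, h.1, h.2] at ha
    intro e he a ha b hb hda hdb
    by_contra hab
    have hpair := eq_pair_of_card_eq_two (hE e he) ha hb hab
    rcases hdij a hda with rfl | rfl <;> rcases hdij b hdb with rfl | rfl
    · exact hab rfl
    · exact hnij (hpair ▸ he)
    · exact hnij (pair_comm a b ▸ hpair ▸ he)
    · exact hab rfl
  have hline := lagrangian_add_smul (x := x) hd
  rcases le_total 0 (lagrangian E (x + d) - lagrangian E x) with hc | hc
  · refine ⟨transfer x i j, transfer_mem_stdSimplex hx i j, support_transfer_ssubset hi hj hij, ?_⟩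
    rw [transfer, hline]
    exact le_add_of_nonneg_right (mul_nonneg (hx.1 j) hc)
  · have hji : transfer x j i = x + (-x i) • d := by
      rw [transfer, neg_smul, ← smul_neg, neg_sub]
    refine ⟨transfer x j i, transfer_mem_stdSimplex hx j i,
      support_transfer_ssubset hj hi hij.symm, ?_⟩
    rw [hji, hline]
    exact le_add_of_nonneg_right (mul_nonneg_of_nonpos_of_nonpos (neg_nonpos.2 (hx.1 i)) hc)

theorem exists_isClique_support_lagrangian_le [Fintype α] {E : Finset (Finset α)}
    (hE : ∀ e ∈ E, #e = 2) {x : α → ℝ} (hx : x ∈ stdSimplex ℝ α) :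
    ∃ y ∈ stdSimplex ℝ α, IsClique E {k | y k ≠ 0} ∧ lagrangian E x ≤ lagrangian E y := by
  induction hm : #{k | x k ≠ 0} using Nat.strong_induction_on generalizing x with
  | _ m ih =>
    by_cases hcl : IsClique E {k | x k ≠ 0}
    · exact ⟨x, hx, hcl, le_rfl⟩
    simp only [IsClique, mem_filter, mem_univ, true_and, not_forall] at hcl
    obtain ⟨i, hi, j, hj, hij, hnij⟩ := hcl
    obtain ⟨y, hy, hsupp, hxy⟩ := exists_support_ssubset_lagrangian_le hE hx hi hj hij hnij
    obtain ⟨z, hz, hzc, hyz⟩ := ih _ (hm ▸ card_lt_card hsupp) hy rfl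
    exact ⟨z, hz, hzc, hxy.trans hyz⟩

noncomputable def uniformOn (s : Finset α) (k : α) : ℝ :=
  if k ∈ s then (#s : ℝ)⁻¹ else 0

theorem uniformOn_mem_stdSimplex [Fintype α] {s : Finset α} (hs : s.Nonempty) :
    uniformOn s ∈ stdSimplex ℝ α := by
  refine ⟨fun k => by unfold uniformOn; split_ifs <;> positivity, ?_⟩
  simp [uniformOn, sum_ite_mem, hs.card_pos.ne']

theorem lagrangian_uniformOn {E : Finset (Finset α)} (hE : ∀ e ∈ E, #e = 2) {s : Finset α}
    (hs : IsClique E s) (hne : s.Nonempty) :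
    lagrangian E (uniformOn s) = 1 / 2 * (1 - 1 / #s) := by
  have hedges : {e ∈ E | e ⊆ s} = s.powersetCard 2 := by
    ext e
    simp only [mem_filter, mem_powersetCard]
    constructor
    · rintro ⟨he, hes⟩
      exact ⟨hes, hE e he⟩
    · rintro ⟨hes, hc⟩
      obtain ⟨a, b, hab, rfl⟩ := card_eq_two.1 hc
      exact ⟨hs a (hes (by simp)) b (hes (by simp)) hab, hes⟩
  have hvalue : ∀ e ∈ s.powersetCard 2, ∏ k ∈ e, (#s : ℝ)⁻¹ = (#s : ℝ)⁻¹ ^ 2 := fun e he => by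
    rw [prod_const, (mem_powersetCard.1 he).2]
  simp only [lagrangian, uniformOn, prod_ite_zero]
  rw [← sum_filter]
  simp_rw [← subset_iff]
  rw [hedges, sum_congr rfl hvalue, sum_const, card_powersetCard, nsmul_eq_mul,
    Nat.cast_choose_two]
  have : (#s : ℝ) ≠ 0 := by exact_mod_cast hne.card_pos.ne'
  field_simp

/-- Motzkin–Straus: for a graph (2-uniform hypergraph) on `n` vertices whose largest
clique has order `l`, the maximum over the standard simplex of
`λ(G,x) = Σ_{ij ∈ E} x_i x_j` equals `(1/2)(1 - 1/l)`. -/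
theorem motzkin_straus (n l : ℕ) (hn : 0 < n)
    (E : Finset (Finset (Fin n))) (hE : ∀ e ∈ E, e.card = 2)
    (hclique : ∃ s : Finset (Fin n), s.card = l ∧
      ∀ i ∈ s, ∀ j ∈ s, i ≠ j → ({i, j} : Finset (Fin n)) ∈ E)
    (hmax : ∀ s : Finset (Fin n),
      (∀ i ∈ s, ∀ j ∈ s, i ≠ j → ({i, j} : Finset (Fin n)) ∈ E) → s.card ≤ l) :
    IsGreatest {v : ℝ | ∃ x : Fin n → ℝ, (∀ i, 0 ≤ x i) ∧ (∑ i, x i) = 1 ∧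
      v = ∑ e ∈ E, ∏ i ∈ e, x i} ((1 / 2) * (1 - 1 / l)) := by
  obtain ⟨s, rfl, hs⟩ := hclique
  have hne : s.Nonempty := by simpa using hmax {⟨0, hn⟩} (by simp)
  refine ⟨⟨uniformOn s, (uniformOn_mem_stdSimplex hne).1, (uniformOn_mem_stdSimplex hne).2,
    (lagrangian_uniformOn hE hs hne).symm⟩, ?_⟩
  rintro v ⟨x, hx0, hx1, rfl⟩
  obtain ⟨y, hy, hyc, hxy⟩ := exists_isClique_support_lagrangian_le hE ⟨hx0, hx1⟩
  exact hxy.trans (lagrangian_le_of_card_support_le hE hy (hmax _ hyc))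
end

section
/- If H is a {1,2}-graph in which the order of a maximum complete {1,2}-subgraph is t (t ≥ 2), then λ'(H) = 2 - 1/t. -/
/-!
If `i, j` carry weight but `{i, j}` is not an edge, no edge contains both, so `λ'` is
affine along `x_i + x_j = const`; moving all the weight onto the vertex with the larger
partial derivative does not decrease `λ'` and shrinks the support. Hence it suffices to
bound `λ'(x)` when the support of `x` spans a clique of the 2-graph. There the quadratic
part is `(∑ x)² - ∑ x² = 1 - ∑ x²`, and the linear part `u` is carried by the support
vertices lying in `E1`, which span a complete `{1,2}`-subgraph, so there are at most `t`
of them and Cauchy–Schwarz gives `u² ≤ t ∑ x²`. Finally `u + 1 - u²/t ≤ 2 - 1/t` for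
`u ≤ 1 ≤ t - 1`. The uniform weight on a maximum complete `{1,2}`-subgraph attains
`2 - 1/t`.
-/

open Finset

namespace OneTwoGraph

variable {α : Type*} [DecidableEq α]

theorem two_mul_sum_powersetCard_two_prod {R : Type*} [CommRing R] (S : Finset α)
    (x : α → R) :
    2 * ∑ e ∈ S.powersetCard 2, ∏ m ∈ e, x m =
      (∑ i ∈ S, x i) ^ 2 - ∑ i ∈ S, x i ^ 2 := by
  induction S using Finset.induction_on with
  | empty => rw [powersetCard_eq_empty.2 (by simp)]; simp
  | insert a S ha ih =>
    have hdisj : Disjoint (S.powersetCard 2) ((S.powersetCard 1).image (insert a)) := by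
      refine disjoint_right.2 fun e he he2 => ?_
      obtain ⟨e', -, rfl⟩ := mem_image.1 he
      exact ha ((mem_powersetCard.1 he2).1 (mem_insert_self a e'))
    have hinj : Set.InjOn (insert a) (S.powersetCard 1 : Set (Finset α)) := fun e he e' he' h => by
      have hae : a ∉ e := fun h' => ha ((mem_powersetCard.1 he).1 h')
      have hae' : a ∉ e' := fun h' => ha ((mem_powersetCard.1 he').1 h')
      rw [← erase_insert hae, ← erase_insert hae', h]
    have hpair : ∀ i ∈ S, ∏ m ∈ insert a {i}, x m = x a * x i := fun i hi => by
      rw [prod_pair (ne_of_mem_of_not_mem hi ha).symm]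
    rw [powersetCard_succ_insert ha, sum_union hdisj, sum_image hinj, powersetCard_one, sum_map]
    simp only [Function.Embedding.coeFn_mk]
    rw [sum_congr rfl hpair, ← mul_sum, sum_insert ha, sum_insert ha]
    linear_combination ih

def IsPairClique (E2 : Finset (Finset α)) (S : Finset α) : Prop :=
  ∀ i ∈ S, ∀ j ∈ S, i ≠ j → ({i, j} : Finset α) ∈ E2

def IsCompleteSubgraph (E1 : Finset α) (E2 : Finset (Finset α)) (T : Finset α) : Prop :=
  T ⊆ E1 ∧ IsPairClique E2 T

def lagrangian (E1 : Finset α) (E2 : Finset (Finset α)) (x : α → ℝ) : ℝ :=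
  ∑ i ∈ E1, x i + 2 * ∑ e ∈ E2, ∏ m ∈ e, x m

theorem IsPairClique.subset {E2 : Finset (Finset α)} {S T : Finset α} (hS : IsPairClique E2 S)
    (hTS : T ⊆ S) : IsPairClique E2 T :=
  fun i hi j hj => hS i (hTS hi) j (hTS hj)

variable {E1 : Finset α} {E2 : Finset (Finset α)}

theorem sum_prod_eq_sum_powersetCard_of_isPairClique (hE2 : ∀ e ∈ E2, #e = 2)
    {S : Finset α} (hS : IsPairClique E2 S) {x : α → ℝ} (hx : ∀ i ∉ S, x i = 0) :
    ∑ e ∈ E2, ∏ m ∈ e, x m = ∑ e ∈ S.powersetCard 2, ∏ m ∈ e, x m := by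
  have hinside : ∑ e ∈ E2 with e ⊆ S, ∏ m ∈ e, x m = ∑ e ∈ E2, ∏ m ∈ e, x m :=
    sum_filter_of_ne fun e _ hne m hm => by_contra fun hmS => hne (prod_eq_zero hm (hx m hmS))
  rw [← hinside]
  congr 1
  ext e
  simp only [mem_filter, mem_powersetCard]
  refine ⟨fun ⟨he, heS⟩ => ⟨heS, hE2 e he⟩, fun ⟨heS, hcard⟩ => ⟨?_, heS⟩⟩
  obtain ⟨a, b, hab, rfl⟩ := card_eq_two.1 hcard
  exact hS a (heS (mem_insert_self a {b})) b (heS (mem_insert_of_mem (mem_singleton_self b))) hab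

theorem two_mul_sum_prod_of_isPairClique [Fintype α] (hE2 : ∀ e ∈ E2, #e = 2)
    {S : Finset α} (hS : IsPairClique E2 S) {x : α → ℝ} (hx : ∀ i ∉ S, x i = 0) :
    2 * ∑ e ∈ E2, ∏ m ∈ e, x m = (∑ i, x i) ^ 2 - ∑ i, x i ^ 2 := by
  have hsum : ∑ i ∈ S, x i = ∑ i, x i := sum_subset (subset_univ S) fun i _ hi => hx i hi
  have hsq : ∑ i ∈ S, x i ^ 2 = ∑ i, x i ^ 2 :=
    sum_subset (subset_univ S) fun i _ hi => by rw [hx i hi, sq, zero_mul]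
  rw [sum_prod_eq_sum_powersetCard_of_isPairClique hE2 hS hx, two_mul_sum_powersetCard_two_prod,
    hsum, hsq]

def partialLagrangian (E1 : Finset α) (E2 : Finset (Finset α)) (x : α → ℝ) (i : α) : ℝ :=
  (if i ∈ E1 then 1 else 0) + 2 * ∑ e ∈ E2 with i ∈ e, ∏ m ∈ e.erase i, x m

def merge (x : α → ℝ) (i j : α) : α → ℝ :=
  Function.update (Function.update x j 0) i (x i + x j)

section Merge

variable {x : α → ℝ} {i j : α}

theorem merge_apply (hij : i ≠ j) (k : α) :
    merge x i j k = x k + x j * ((if k = i then 1 else 0) - (if k = j then 1 else 0)) := by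
  rcases eq_or_ne k i with rfl | hki
  · simp [merge, hij]
  rcases eq_or_ne k j with rfl | hkj
  · simp [merge, hki]
  · simp [merge, hki, hkj]

theorem sum_merge (hij : i ≠ j) (s : Finset α) :
    ∑ k ∈ s, merge x i j k
      = ∑ k ∈ s, x k + x j * ((if i ∈ s then 1 else 0) - (if j ∈ s then 1 else 0)) := by
  simp_rw [merge_apply hij, sum_add_distrib, ← mul_sum, sum_sub_distrib, sum_ite_eq']

theorem prod_merge {e : Finset α} (he : ¬(i ∈ e ∧ j ∈ e)) :
    ∏ m ∈ e, merge x i j m = ∏ m ∈ e, x m + x j *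
      ((if i ∈ e then ∏ m ∈ e.erase i, x m else 0) -
        (if j ∈ e then ∏ m ∈ e.erase j, x m else 0)) := by
  by_cases hi : i ∈ e
  · have hj : j ∉ e := fun hj => he ⟨hi, hj⟩
    rw [merge, prod_update_of_mem hi, sdiff_singleton_eq_erase,
      prod_update_of_notMem (fun h => hj (mem_of_mem_erase h)), ← mul_prod_erase e x hi,
      if_pos hi, if_neg hj]
    ring
  by_cases hj : j ∈ e
  · rw [merge, prod_update_of_notMem hi, prod_update_of_mem hj, ← mul_prod_erase e x hj,
      if_neg hi, if_pos hj]
    ring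
  · rw [merge, prod_update_of_notMem hi, prod_update_of_notMem hj, if_neg hi, if_neg hj]
    ring

theorem lagrangian_merge (hij : i ≠ j) (hE2 : ∀ e ∈ E2, ¬(i ∈ e ∧ j ∈ e)) :
    lagrangian E1 E2 (merge x i j)
      = lagrangian E1 E2 x + x j * (partialLagrangian E1 E2 x i - partialLagrangian E1 E2 x j) := by
  rw [lagrangian, sum_merge hij, sum_congr rfl fun e he => prod_merge (hE2 e he),
    sum_add_distrib, ← mul_sum, sum_sub_distrib, ← sum_filter, ← sum_filter, lagrangian,
    partialLagrangian, partialLagrangian]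
  ring

variable [Fintype α]

theorem merge_mem_stdSimplex (hij : i ≠ j) (hx : x ∈ stdSimplex ℝ α) :
    merge x i j ∈ stdSimplex ℝ α := by
  refine ⟨fun k => ?_, by simp [sum_merge hij, hx.2]⟩
  rcases eq_or_ne k i with rfl | hki
  · simpa [merge] using add_nonneg (hx.1 k) (hx.1 j)
  rcases eq_or_ne k j with rfl | hkj
  · simp [merge, hki]
  · simpa [merge, hki, hkj] using hx.1 k

theorem card_support_merge_lt (hij : i ≠ j) (hi : x i ≠ 0) (hj : x j ≠ 0) :
    #{k | merge x i j k ≠ 0} < #{k | x k ≠ 0} := by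
  have hsub :
      ({k | merge x i j k ≠ 0} : Finset α) ⊆ ({k | x k ≠ 0} : Finset α).erase j := by
    intro k hk
    simp only [mem_filter, mem_univ, true_and, mem_erase] at hk ⊢
    rcases eq_or_ne k i with rfl | hki
    · exact ⟨hij, hi⟩
    rcases eq_or_ne k j with rfl | hkj
    · simp [merge, hki] at hk
    · simpa [merge, hki, hkj] using hk
  calc #{k | merge x i j k ≠ 0} ≤ #(({k | x k ≠ 0} : Finset α).erase j) := card_le_card hsub
    _ < #{k | x k ≠ 0} := card_erase_lt_of_mem (by simpa using hj)

end Merge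

variable [Fintype α]

theorem exists_lagrangian_le_of_pair_notMem (hE2 : ∀ e ∈ E2, #e = 2) {x : α → ℝ}
    (hx : x ∈ stdSimplex ℝ α) {i j : α} (hij : i ≠ j) (hi : x i ≠ 0) (hj : x j ≠ 0)
    (hnot : ({i, j} : Finset α) ∉ E2) :
    ∃ y ∈ stdSimplex ℝ α, #{k | y k ≠ 0} < #{k | x k ≠ 0} ∧
      lagrangian E1 E2 x ≤ lagrangian E1 E2 y := by
  wlog hgrad : partialLagrangian E1 E2 x j ≤ partialLagrangian E1 E2 x i generalizing i j
  · exact this hij.symm hj hi (by rwa [pair_comm]) (le_of_not_ge hgrad)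
  have hsep : ∀ e ∈ E2, ¬(i ∈ e ∧ j ∈ e) := fun e he ⟨hie, hje⟩ => hnot <| by
    have hsub : ({i, j} : Finset α) ⊆ e := insert_subset hie (singleton_subset_iff.2 hje)
    rwa [eq_of_subset_of_card_le hsub (by rw [hE2 e he, card_pair hij])]
  refine ⟨merge x i j, merge_mem_stdSimplex hij hx, card_support_merge_lt hij hi hj, ?_⟩
  rw [lagrangian_merge hij hsep]
  exact le_add_of_nonneg_right (mul_nonneg (hx.1 j) (sub_nonneg.2 hgrad))

theorem add_one_sub_le_two_sub_one_div {t u q : ℝ} (ht : 2 ≤ t) (hu : u ≤ 1)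
    (hq : u ^ 2 ≤ t * q) :
    u + 1 - q ≤ 2 - 1 / t := by
  rw [← sub_nonneg]
  have key : 2 - 1 / t - (u + 1 - q) = ((1 - u) * (t - 1 - u) + (t * q - u ^ 2)) / t := by
    field_simp
    ring
  rw [key]
  have : 0 ≤ (1 - u) * (t - 1 - u) := mul_nonneg (by linarith) (by linarith)
  positivity

theorem lagrangian_le_of_isPairClique_support {t : ℕ} (ht : 2 ≤ t) (hE2 : ∀ e ∈ E2, #e = 2)
    (hmax : ∀ T, IsCompleteSubgraph E1 E2 T → #T ≤ t) {x : α → ℝ}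
    (hx : x ∈ stdSimplex ℝ α) (hS : IsPairClique E2 {i | x i ≠ 0}) :
    lagrangian E1 E2 x ≤ 2 - 1 / t := by
  set A : Finset α := {i ∈ E1 | x i ≠ 0}
  have hA : #A ≤ t :=
    hmax A ⟨filter_subset _ _, hS.subset fun i hi => by simpa using (mem_filter.1 hi).2⟩
  have hquad : 2 * ∑ e ∈ E2, ∏ m ∈ e, x m = 1 - ∑ i, x i ^ 2 := by
    rw [two_mul_sum_prod_of_isPairClique hE2 hS fun i hi => by simpa using hi, hx.2, one_pow]
  have hlin : ∑ i ∈ E1, x i = ∑ i ∈ A, x i := (sum_filter_ne_zero E1).symm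
  have hu : ∑ i ∈ E1, x i ≤ 1 := hx.2 ▸ sum_le_univ_sum_of_nonneg hx.1
  have hcs : (∑ i ∈ E1, x i) ^ 2 ≤ t * ∑ i, x i ^ 2 := calc
    (∑ i ∈ E1, x i) ^ 2 = (∑ i ∈ A, x i) ^ 2 := by rw [hlin]
    _ ≤ #A * ∑ i ∈ A, x i ^ 2 := sq_sum_le_card_mul_sum_sq
    _ ≤ t * ∑ i, x i ^ 2 := mul_le_mul (by exact_mod_cast hA)
        (sum_le_univ_sum_of_nonneg fun i => sq_nonneg (x i)) (sum_nonneg fun i _ => sq_nonneg _)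
        (by positivity)
  rw [lagrangian, hquad, ← add_sub_assoc]
  exact add_one_sub_le_two_sub_one_div (by exact_mod_cast ht) hu hcs

theorem lagrangian_le {t : ℕ} (ht : 2 ≤ t) (hE2 : ∀ e ∈ E2, #e = 2)
    (hmax : ∀ T, IsCompleteSubgraph E1 E2 T → #T ≤ t) {x : α → ℝ}
    (hx : x ∈ stdSimplex ℝ α) :
    lagrangian E1 E2 x ≤ 2 - 1 / t := by
  induction hk : #{i | x i ≠ 0} using Nat.strong_induction_on generalizing x with
  | _ k ih =>
  by_cases hS : IsPairClique E2 {i | x i ≠ 0}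
  · exact lagrangian_le_of_isPairClique_support ht hE2 hmax hx hS
  simp only [IsPairClique, mem_filter, mem_univ, true_and, not_forall] at hS
  obtain ⟨i, hi, j, hj, hij, hnot⟩ := hS
  obtain ⟨y, hy, hlt, hle⟩ := exists_lagrangian_le_of_pair_notMem hE2 hx hij hi hj hnot
  exact hle.trans (ih _ (hk ▸ hlt) hy rfl)

noncomputable def barycenter (T : Finset α) : α → ℝ :=
  fun i => if i ∈ T then (#T : ℝ)⁻¹ else 0

theorem barycenter_mem_stdSimplex {T : Finset α} (hT : T.Nonempty) :
    barycenter T ∈ stdSimplex ℝ α := by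
  refine ⟨fun i => by unfold barycenter; positivity, ?_⟩
  simp [barycenter, sum_ite_mem, hT.card_ne_zero]

theorem lagrangian_barycenter (hE2 : ∀ e ∈ E2, #e = 2) {T : Finset α}
    (hT : IsCompleteSubgraph E1 E2 T) (hT0 : T.Nonempty) :
    lagrangian E1 E2 (barycenter T) = 2 - 1 / #T := by
  have hquad := two_mul_sum_prod_of_isPairClique hE2 hT.2 (x := barycenter T)
    fun i hi => if_neg hi
  have hsq : ∑ i, barycenter T i ^ 2 = 1 / #T := by
    simp [barycenter, sum_ite_mem, sq, hT0.card_ne_zero]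
  have hlin : ∑ i ∈ E1, barycenter T i = 1 := by
    simp [barycenter, sum_ite_mem, inter_eq_right.2 hT.1, hT0.card_ne_zero]
  rw [lagrangian, hquad, hlin, (barycenter_mem_stdSimplex hT0).2, hsq]
  ring

end OneTwoGraph

/-- Extension of Motzkin–Straus to `{1,2}`-graphs: if the order of a maximum complete
`{1,2}`-subgraph of `H` is `t ≥ 2`, then `λ'(H) = 2 - 1/t`. -/
theorem lagrangian_one_two_graph (n t : ℕ) (ht : 2 ≤ t)
    (E1 : Finset (Fin n)) (E2 : Finset (Finset (Fin n))) (hE2 : ∀ e ∈ E2, e.card = 2)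
    (hclique : ∃ T : Finset (Fin n), T.card = t ∧ (∀ v ∈ T, v ∈ E1) ∧
      ∀ i ∈ T, ∀ j ∈ T, i ≠ j → ({i, j} : Finset (Fin n)) ∈ E2)
    (hmax : ∀ T : Finset (Fin n),
      ((∀ v ∈ T, v ∈ E1) ∧ ∀ i ∈ T, ∀ j ∈ T, i ≠ j → ({i, j} : Finset (Fin n)) ∈ E2) →
      T.card ≤ t) :
    IsGreatest {v : ℝ | ∃ x : Fin n → ℝ, (∀ i, 0 ≤ x i) ∧ (∑ i, x i) = 1 ∧
      v = (∑ i ∈ E1, x i) + 2 * ∑ e ∈ E2, ∏ i ∈ e, x i} (2 - 1 / t) := by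
  obtain ⟨T, hTcard, hT⟩ := hclique
  have hT0 : T.Nonempty := card_pos.1 (by omega)
  obtain ⟨hbar0, hbar1⟩ := OneTwoGraph.barycenter_mem_stdSimplex hT0
  refine ⟨⟨OneTwoGraph.barycenter T, hbar0, hbar1, ?_⟩, ?_⟩
  · rw [← hTcard]
    exact (OneTwoGraph.lagrangian_barycenter hE2 hT hT0).symm
  · rintro v ⟨x, hx0, hx1, rfl⟩
    exact OneTwoGraph.lagrangian_le ht hE2 hmax ⟨hx0, hx1⟩
end

section
/- If H is a {1,2}-graph whose 2-level graph H^2 is not bipartite and has chromatic number t = χ(H^2) ≥ 3, then the Turán density of H is π(H) = 2 - 1/(t-1). -/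
/-!
For the lower bound take `G¹ = [n]` and for `G²` the Turán graph `T(n, t - 1)`: it is
`(t - 1)`-colourable, so it cannot host `H²`, and it has `(1 - 1/(t - 1) - o(1)) C(n, 2)` edges.

For the upper bound let `h_n(G) ≥ 2 - 1/(t - 1) + δ`. At most `C(n, 2) - C(|G¹|, 2)` pairs leave
`G¹`, so inside `G¹` the degree sum of `G²` is at least
`(1 - 1/(t - 1) + δ/2) |G¹| (|G¹| - 1) + δ n² / 4`. Deleting vertices of low degree one at a time
preserves this excess and ends in a set `W ⊆ G¹` with `|W| (|W| - 1) ≥ δ n² / 4` on which `G²` has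
minimum degree `(1 - 1/(t - 1) + δ/4) |W|`. By the minimum-degree Erdős–Stone theorem `G²[W]`
contains the complete `t`-partite graph with parts of size `|V(H)|`, hence `H²`; as `W ⊆ G¹`, this
is a copy of `H`.
-/

open Finset Filter

namespace SimpleGraph

section PairGraph

variable {V : Type*} [DecidableEq V]

def pairGraph (E : Finset (Finset V)) : SimpleGraph V where
  Adj x y := x ≠ y ∧ {x, y} ∈ E
  symm := ⟨fun x y h => ⟨h.1.symm, pair_comm x y ▸ h.2⟩⟩
  loopless := ⟨fun _ h => h.1 rfl⟩

instance (E : Finset (Finset V)) : DecidableRel (pairGraph E).Adj :=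
  fun x y => inferInstanceAs (Decidable (x ≠ y ∧ {x, y} ∈ E))

lemma pairGraph_adj {E : Finset (Finset V)} {x y : V} :
    (pairGraph E).Adj x y ↔ x ≠ y ∧ {x, y} ∈ E := Iff.rfl

def edgePairs (G : SimpleGraph V) [Fintype G.edgeSet] : Finset (Finset V) :=
  G.edgeFinset.image Sym2.toFinset

variable {G : SimpleGraph V} [Fintype G.edgeSet]

lemma mem_edgePairs {e : Finset V} : e ∈ edgePairs G ↔ ∃ x y, G.Adj x y ∧ e = {x, y} := by
  simp [edgePairs, Sym2.exists, Sym2.toFinset_mk_eq, eq_comm]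

lemma card_eq_two_of_mem_edgePairs {e : Finset V} (he : e ∈ edgePairs G) : #e = 2 := by
  obtain ⟨x, y, hxy, rfl⟩ := mem_edgePairs.1 he
  exact card_pair hxy.ne

lemma card_edgePairs : #(edgePairs G) = #G.edgeFinset := by
  refine card_image_of_injOn fun e _ e' _ h => Sym2.ext fun x => ?_
  rw [← Sym2.mem_toFinset, h, Sym2.mem_toFinset]

@[simp]
lemma pairGraph_edgePairs : pairGraph (edgePairs G) = G := by
  ext x y
  simp only [pairGraph_adj, mem_edgePairs]
  constructor
  · rintro ⟨-, a, b, hab, he⟩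
    rcases Set.pair_eq_pair_iff.1 (by simpa using congrArg ((↑) : Finset V → Set V) he) with
      ⟨rfl, rfl⟩ | ⟨rfl, rfl⟩
    exacts [hab, hab.symm]
  · exact fun h => ⟨h.ne, x, y, h, rfl⟩

lemma edgePairs_pairGraph [Fintype V] {E : Finset (Finset V)} (hE : ∀ e ∈ E, #e = 2) :
    edgePairs (pairGraph E) = E := by
  ext e
  rw [mem_edgePairs]
  constructor
  · rintro ⟨x, y, ⟨-, h⟩, rfl⟩
    exact h
  · intro he
    obtain ⟨x, y, hxy, rfl⟩ := card_eq_two.1 (hE e he)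
    exact ⟨x, y, ⟨hxy, he⟩, rfl⟩

end PairGraph

section DegreeWithin

variable {V : Type*} [Fintype V] [DecidableEq V] (G : SimpleGraph V) [DecidableRel G.Adj]

lemma card_neighborFinset_inter (W : Finset V) (v : V) :
    #(G.neighborFinset v ∩ W) = ∑ x ∈ W, if G.Adj v x then 1 else 0 := by
  rw [← card_filter, inter_comm]
  congr 1
  ext; simp

lemma card_neighborFinset_inter_le {W : Finset V} {v : V} (hv : v ∈ W) :
    #(G.neighborFinset v ∩ W) ≤ #W - 1 := by
  rw [← card_erase_of_mem hv]
  refine card_le_card fun u hu => ?_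
  rw [mem_inter, mem_neighborFinset] at hu
  exact mem_erase.2 ⟨hu.1.ne', hu.2⟩

lemma sum_card_neighborFinset_inter_erase {W : Finset V} {v : V} (hv : v ∈ W) :
    ∑ u ∈ W, #(G.neighborFinset u ∩ W)
      = ∑ u ∈ W.erase v, #(G.neighborFinset u ∩ W.erase v) + 2 * #(G.neighborFinset v ∩ W) := by
  simp only [card_neighborFinset_inter]
  have hsymm : ∑ u ∈ W.erase v, (if G.Adj u v then 1 else 0)
      = ∑ x ∈ W.erase v, if G.Adj v x then 1 else 0 :=
    sum_congr rfl fun u _ => if_congr (G.adj_comm u v) rfl rfl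
  rw [← add_sum_erase W _ hv, ← add_sum_erase W _ hv, if_neg (G.loopless.irrefl v)]
  simp_rw [← add_sum_erase W _ hv]
  rw [sum_add_distrib, hsymm]
  ring

lemma exists_subset_forall_le_card_neighborFinset_inter {γ c : ℝ} (hγ : 0 ≤ γ) (W : Finset V)
    (h : γ * #W * (#W - 1) + c ≤ ∑ v ∈ W, (#(G.neighborFinset v ∩ W) : ℝ)) :
    ∃ W' ⊆ W, (∀ v ∈ W', γ * (#W' - 1) ≤ #(G.neighborFinset v ∩ W')) ∧
      c ≤ #W' * (#W' - 1 : ℝ) := by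
  induction W using strongInduction with
  | H W ih =>
  by_cases hmin : ∀ v ∈ W, γ * (#W - 1) ≤ #(G.neighborFinset v ∩ W)
  · refine ⟨W, subset_rfl, hmin, ?_⟩
    have hsum : ∑ v ∈ W, (#(G.neighborFinset v ∩ W) : ℝ) ≤ #W * (#W - 1) := by
      refine (sum_le_card_nsmul _ _ (#W - 1 : ℝ) fun v hv => ?_).trans_eq (nsmul_eq_mul _ _)
      have := G.card_neighborFinset_inter_le hv
      rw [Nat.le_sub_one_iff_lt (card_pos.2 ⟨v, hv⟩)] at this
      rw [le_sub_iff_add_le]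
      exact_mod_cast this
    have : (0 : ℝ) ≤ #W * (#W - 1) := by
      rcases W.eq_empty_or_nonempty with rfl | hW
      · simp
      · have : (1 : ℝ) ≤ #W := by exact_mod_cast hW.card_pos
        positivity
    nlinarith
  · push Not at hmin
    obtain ⟨v, hv, hlow⟩ := hmin
    have hcard : (#(W.erase v) : ℝ) = #W - 1 := by
      rw [card_erase_of_mem hv, Nat.cast_sub (card_pos.2 ⟨v, hv⟩), Nat.cast_one]
    have hsum : ∑ u ∈ W, (#(G.neighborFinset u ∩ W) : ℝ)
        = ∑ u ∈ W.erase v, (#(G.neighborFinset u ∩ W.erase v) : ℝ)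
          + 2 * #(G.neighborFinset v ∩ W) := by
      exact_mod_cast G.sum_card_neighborFinset_inter_erase hv
    obtain ⟨W', hW', hdeg, hc⟩ := ih (W.erase v) (erase_ssubset hv) (by rw [hcard]; nlinarith)
    exact ⟨W', hW'.trans (erase_subset v W), hdeg, hc⟩

lemma two_mul_card_edgeFinset_le_sum_card_inter (W : Finset V) :
    2 * #G.edgeFinset ≤ ∑ v ∈ W, #(G.neighborFinset v ∩ W)
      + (Fintype.card V - #W) * (Fintype.card V - 1) + #W * (Fintype.card V - #W) := by
  have hin : ∑ v ∈ W, G.degree v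
      ≤ ∑ v ∈ W, #(G.neighborFinset v ∩ W) + #W * (Fintype.card V - #W) := by
    rw [← card_compl, ← smul_eq_mul, ← sum_const, ← sum_add_distrib]
    refine sum_le_sum fun v _ => ?_
    rw [← card_neighborFinset_eq_degree, ← card_inter_add_card_sdiff _ W, sdiff_eq_inter_compl]
    exact Nat.add_le_add_left (card_le_card inter_subset_right) _
  have hout : ∑ v ∈ Wᶜ, G.degree v ≤ (Fintype.card V - #W) * (Fintype.card V - 1) := by
    rw [← card_compl, ← smul_eq_mul]
    exact sum_le_card_nsmul _ _ _ fun v _ => Nat.le_sub_one_of_lt (G.degree_lt_card_verts v)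
  rw [← sum_degrees_eq_twice_card_edges, ← sum_add_sum_compl W]
  omega

lemma degree_induce_coe (W : Finset V) (v : (W : Set V)) :
    (G.induce W).degree v = #(G.neighborFinset v ∩ W) := by
  have := congrArg card (G.map_neighborFinset_induce (s := (W : Set V)) v)
  rw [card_map, toFinset_coe] at this
  rw [← this, card_neighborFinset_eq_degree]
  congr!

end DegreeWithin

lemma eventually_completeEquipartiteGraph_isContained_of_minDegree_of_card_eq {ε : ℝ}
    (hε : 0 < ε) (r t : ℕ) :
    ∀ᶠ k in atTop, ∀ {V : Type*} [Fintype V] (G : SimpleGraph V) [DecidableRel G.Adj],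
      Fintype.card V = k → (1 - 1 / r + ε) * k ≤ G.minDegree →
        completeEquipartiteGraph (r + 1) t ⊑ G := by
  filter_upwards [eventually_completeEquipartiteGraph_isContained_of_minDegree hε r t]
    with k hk V _ G _ hV hδ
  classical
  rw [isContained_congr Iso.refl (G.overFinIso hV)]
  exact hk (by rwa [← (G.overFinIso hV).minDegree_eq])

lemma colorable_turanGraph {n r : ℕ} (hr : 0 < r) : (turanGraph n r).Colorable r :=
  ⟨Coloring.mk (fun v => ⟨v % r, Nat.mod_lt _ hr⟩) fun h heq => h (congrArg Fin.val heq)⟩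

lemma card_le_degree_turanGraph_add (n r : ℕ) (v : Fin n) :
    n ≤ (turanGraph n r).degree v + (n / r + 1) := by
  have hclass : #{w : Fin n | (v : ℕ) % r = w % r} ≤ n / r + 1 := by
    rw [← card_range (n / r + 1)]
    refine card_le_card_of_injOn (fun w : Fin n => (w : ℕ) / r) (fun w _ => ?_)
      fun w hw u hu h => ?_
    · simpa [Nat.lt_succ_iff] using Nat.div_le_div_right w.2.le
    · simp only [coe_filter, mem_univ, true_and, Set.mem_ofPred_eq] at hw hu
      exact Fin.ext (by
        rw [← Nat.div_add_mod w r, ← Nat.div_add_mod u r, ← hw, ← hu,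
          show (w : ℕ) / r = u / r from h])
  have hsplit := card_filter_add_card_filter_not (s := (univ : Finset (Fin n)))
    (p := fun w : Fin n => (v : ℕ) % r ≠ w % r)
  rw [card_univ, Fintype.card_fin] at hsplit
  rw [← card_neighborFinset_eq_degree, neighborFinset_eq_filter]
  simp only [turanGraph_adj, not_not] at hsplit ⊢
  omega

end SimpleGraph

open SimpleGraph

section OneTwoGraph

variable {α V : Type*} [DecidableEq V]

def ContainsCopy (G1 : Finset V) (G2 : Finset (Finset V)) (E1 : Finset α)
    (E2 : Finset (Finset α)) : Prop :=
  ∃ f : α → V, Function.Injective f ∧ (∀ i ∈ E1, f i ∈ G1) ∧ ∀ e ∈ E2, e.image f ∈ G2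

lemma ContainsCopy.colorable {G1 : Finset V} {G2 : Finset (Finset V)} {E1 : Finset α}
    {E2 : Finset (Finset α)} [DecidableEq α] (h : ContainsCopy G1 G2 E1 E2) {k : ℕ}
    (hk : (pairGraph G2).Colorable k) : (pairGraph E2).Colorable k := by
  obtain ⟨f, hf, -, hE⟩ := h
  let φ : pairGraph E2 →g pairGraph G2 :=
    ⟨f, fun {x y} hxy => ⟨hf.ne hxy.1, by simpa [image_insert] using hE _ hxy.2⟩⟩
  exact hk.of_hom φ

lemma containsCopy_of_isContained_induce [DecidableEq α] {G1 W : Finset V}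
    {G2 : Finset (Finset V)} {E1 : Finset α} {E2 : Finset (Finset α)} (hW : W ⊆ G1)
    (hE2 : ∀ e ∈ E2, #e = 2) (h : pairGraph E2 ⊑ (pairGraph G2).induce (W : Set V)) :
    ContainsCopy G1 G2 E1 E2 := by
  obtain ⟨c⟩ := h
  refine ⟨fun i => c i, Subtype.val_injective.comp c.injective, fun i _ => hW (c i).2,
    fun e he => ?_⟩
  obtain ⟨x, y, hxy, rfl⟩ := card_eq_two.1 (hE2 e he)
  rw [image_insert, image_singleton]
  exact (c.toHom.map_adj (show (pairGraph E2).Adj x y from ⟨hxy, he⟩)).2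

end OneTwoGraph

noncomputable def lubell {n : ℕ} (G1 : Finset (Fin n)) (G2 : Finset (Finset (Fin n))) : ℝ :=
  #G1 / n + #G2 / n.choose 2

lemma lubell_le_two {n : ℕ} (G1 : Finset (Fin n)) {G2 : Finset (Finset (Fin n))}
    (hG2 : ∀ e ∈ G2, #e = 2) : lubell G1 G2 ≤ 2 := by
  have h1 : (#G1 : ℝ) / n ≤ 1 := div_le_one_of_le₀ (by simpa using card_le_univ G1) (by positivity)
  have h2 : (#G2 : ℝ) / n.choose 2 ≤ 1 := by
    refine div_le_one_of_le₀ ?_ (by positivity)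
    have : G2 ⊆ univ.powersetCard 2 := fun e he => mem_powersetCard.2 ⟨subset_univ e, hG2 e he⟩
    simpa using card_le_card this
  rw [lubell]
  linarith

-- The quadratic part of `rhs - lhs` is `(n - w)(n - c(n + w)) + δ(n² - w²)/2 + δn²/4`, and
-- `δn²/4 ≥ n` dominates the linear part.
lemma lubell_excess_bound {c δ n w : ℝ} (hδ : 0 < δ) (hδc : δ ≤ c) (hc : c ≤ 1 / 2) (hw : 0 ≤ w)
    (hwn : w ≤ n) (hn : 4 ≤ δ * n) :
    δ / 4 * n ^ 2 + w * (n - 1) ≤ (1 - c + δ) * (n * (n - 1)) + (c - δ / 2) * (w * (w - 1)) := by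
  nlinarith [mul_nonneg (sub_nonneg.2 hwn) (show 0 ≤ n - c * (n + w) by nlinarith),
    mul_nonneg hδ.le (show 0 ≤ n ^ 2 - w ^ 2 by nlinarith),
    mul_le_mul_of_nonneg_right hn (show 0 ≤ n by linarith)]

lemma exists_dense_subset_of_le_lubell {n : ℕ} {G1 : Finset (Fin n)} {G2 : Finset (Finset (Fin n))}
    (hG2 : ∀ e ∈ G2, #e = 2) {c δ : ℝ} (hδ : 0 < δ) (hδc : δ ≤ c) (hc : c ≤ 1 / 2)
    (hn : 4 ≤ δ * n) (hG : 2 - c + δ ≤ lubell G1 G2) :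
    ∃ W ⊆ G1, (∀ v ∈ W, (1 - c + δ / 2) * (#W - 1) ≤ #((pairGraph G2).neighborFinset v ∩ W)) ∧
      δ / 4 * n ^ 2 ≤ #W * (#W - 1 : ℝ) := by
  refine (pairGraph G2).exists_subset_forall_le_card_neighborFinset_inter (by linarith) G1 ?_
  have hn8 : (8 : ℝ) ≤ n := by nlinarith
  have hw : #G1 ≤ n := by simpa using card_le_univ G1
  have hedges : 2 * #G2 ≤ ∑ v ∈ G1, #((pairGraph G2).neighborFinset v ∩ G1)
      + (n - #G1) * (n - 1) + #G1 * (n - #G1) := by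
    simpa [← card_edgePairs, edgePairs_pairGraph hG2] using
      (pairGraph G2).two_mul_card_edgeFinset_le_sum_card_inter G1
  have hedgesR : 2 * (#G2 : ℝ) ≤ ∑ v ∈ G1, (#((pairGraph G2).neighborFinset v ∩ G1) : ℝ)
      + (n - #G1) * (n - 1) + #G1 * (n - #G1) := by
    have h1 : 1 ≤ n := by exact_mod_cast (show (1 : ℝ) ≤ n by linarith)
    have := (Nat.cast_le (α := ℝ)).2 hedges
    push_cast [Nat.cast_sub hw, Nat.cast_sub h1] at this
    exact this
  have hlub : (2 - c + δ) * (n * (n - 1)) ≤ #G1 * (n - 1) + 2 * (#G2 : ℝ) := by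
    have hpos : (0 : ℝ) < n * (n - 1) := by nlinarith
    rw [lubell, Nat.cast_choose_two] at hG
    calc (2 - c + δ) * (n * (n - 1))
        ≤ (#G1 / n + #G2 / (n * (n - 1) / 2)) * (n * (n - 1)) :=
          mul_le_mul_of_nonneg_right hG hpos.le
      _ = #G1 * (n - 1) + 2 * #G2 := by
          have : (n : ℝ) - 1 ≠ 0 := by linarith
          field_simp
  have hquad := lubell_excess_bound hδ hδc hc (Nat.cast_nonneg #G1) (by exact_mod_cast hw) hn
  linarith

lemma eventually_containsCopy_of_le_lubell {α : Type*} [Fintype α] [DecidableEq α]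
    (E1 : Finset α) {E2 : Finset (Finset α)} (hE2 : ∀ e ∈ E2, #e = 2) {r : ℕ} (hr : 2 ≤ r)
    (hcol : (pairGraph E2).Colorable (r + 1)) {δ : ℝ} (hδ : 0 < δ) (hδr : δ ≤ 1 / r) :
    ∀ᶠ n in atTop, ∀ (G1 : Finset (Fin n)) (G2 : Finset (Finset (Fin n))),
      (∀ e ∈ G2, #e = 2) → 2 - 1 / r + δ ≤ lubell G1 G2 → ContainsCopy G1 G2 E1 E2 := by
  have hH : pairGraph E2 ⊑ completeEquipartiteGraph (r + 1) (Fintype.card α) := by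
    classical
    exact isContained_completeEquipartiteGraph_of_colorable hcol.some _
      fun _ => Fintype.card_subtype_le _
  obtain ⟨K, hK⟩ := eventually_atTop.1
    ((eventually_completeEquipartiteGraph_isContained_of_minDegree_of_card_eq (ε := δ / 4)
      (by positivity) r (Fintype.card α)).and
      (tendsto_natCast_atTop_atTop.eventually_ge_atTop (4 / δ)))
  have hr_half : (1 : ℝ) / r ≤ 1 / 2 := by
    gcongr
    exact_mod_cast hr
  filter_upwards [(tendsto_natCast_atTop_atTop.const_mul_atTop (by positivity : 0 < δ / 4)
    |>.eventually_ge_atTop ((K : ℝ) + 1))] with n hn G1 G2 hG2 hG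
  obtain ⟨W, hWG1, hdeg, hsize⟩ :=
    exists_dense_subset_of_le_lubell hG2 hδ hδr hr_half (by linarith [K.cast_nonneg (α := ℝ)]) hG
  have hKW : K + 1 ≤ #W := by
    have hnK : (K : ℝ) + 1 ≤ n := by nlinarith
    have : ((K : ℝ) + 1) ^ 2 ≤ #W * (#W - 1) := by nlinarith
    by_contra! h
    have : (#W : ℝ) ≤ K := by exact_mod_cast Nat.lt_succ_iff.1 h
    nlinarith [(#W).cast_nonneg (α := ℝ)]
  obtain ⟨hES, hW_large⟩ := hK #W (by omega)
  have : Nonempty (W : Set (Fin n)) := (card_pos.1 (by omega)).coe_sort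
  obtain ⟨v, hv⟩ := ((pairGraph G2).induce (W : Set (Fin n))).exists_minimal_degree_vertex
  refine containsCopy_of_isContained_induce hWG1 hE2 (hH.trans (hES _ (Fintype.card_coe W) ?_))
  rw [hv, degree_induce_coe]
  have := hdeg v v.2
  nlinarith [div_mul_cancel₀ (4 : ℝ) hδ.ne']

lemma two_sub_le_lubell_turanGraph {n : ℕ} (hn : 2 ≤ n) (r : ℕ) :
    2 - 1 / r * (n / (n - 1)) ≤ lubell univ (edgePairs (turanGraph n r)) := by
  have hdeg : ∀ v, (n : ℝ) - 1 - n / r ≤ (turanGraph n r).degree v := fun v => by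
    have := (Nat.cast_le (α := ℝ)).2 (card_le_degree_turanGraph_add n r v)
    push_cast at this
    linarith [Nat.cast_div_le (α := ℝ) (m := n) (n := r)]
  have hsum : n * ((n : ℝ) - 1 - n / r) ≤ 2 * #(turanGraph n r).edgeFinset := by
    have := card_nsmul_le_sum univ (fun v => ((turanGraph n r).degree v : ℝ)) _ fun v _ => hdeg v
    rw [card_univ, Fintype.card_fin, nsmul_eq_mul, ← Nat.cast_sum,
      sum_degrees_eq_twice_card_edges] at this
    exact_mod_cast this
  have hn1 : (1 : ℝ) < n := by exact_mod_cast hn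
  rw [lubell, card_univ, Fintype.card_fin, card_edgePairs, Nat.cast_choose_two,
    div_self (by positivity)]
  rw [div_div_eq_mul_div, ← sub_le_iff_le_add', le_div_iff₀ (by nlinarith)]
  have : 1 / r * (n / (n - 1)) * (n * (n - 1)) = n * (n / r : ℝ) := by
    have : (n : ℝ) - 1 ≠ 0 := by linarith
    field_simp
  nlinarith

lemma not_containsCopy_edgePairs_turanGraph {α : Type*} [DecidableEq α] {E1 : Finset α}
    {E2 : Finset (Finset α)} {r : ℕ} (hr : 0 < r) (hχ : r < (pairGraph E2).chromaticNumber)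
    {n : ℕ} (G1 : Finset (Fin n)) : ¬ContainsCopy G1 (edgePairs (turanGraph n r)) E1 E2 :=
  fun h => (h.colorable (by rw [pairGraph_edgePairs]; exact colorable_turanGraph hr))
    |>.chromaticNumber_le.not_gt hχ

noncomputable def maxLubell {α : Type*} (E1 : Finset α) (E2 : Finset (Finset α)) (n : ℕ) : ℝ :=
  sSup {v | ∃ (G1 : Finset (Fin n)) (G2 : Finset (Finset (Fin n))),
    (∀ e ∈ G2, #e = 2) ∧ ¬ContainsCopy G1 G2 E1 E2 ∧ v = lubell G1 G2}

section MaxLubell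

variable {α : Type*} (E1 : Finset α) {E2 : Finset (Finset α)}

lemma lubell_le_maxLubell {n : ℕ} {G1 : Finset (Fin n)} {G2 : Finset (Finset (Fin n))}
    (hG2 : ∀ e ∈ G2, #e = 2) (hfree : ¬ContainsCopy G1 G2 E1 E2) :
    lubell G1 G2 ≤ maxLubell E1 E2 n :=
  le_csSup ⟨2, fun _ ⟨G1, _, hG2, _, hv⟩ => hv ▸ lubell_le_two G1 hG2⟩ ⟨G1, G2, hG2, hfree, rfl⟩

lemma maxLubell_le {n : ℕ} {a : ℝ} (ha : 0 ≤ a)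
    (h : ∀ (G1 : Finset (Fin n)) (G2 : Finset (Finset (Fin n))),
      (∀ e ∈ G2, #e = 2) → ¬ContainsCopy G1 G2 E1 E2 → lubell G1 G2 ≤ a) :
    maxLubell E1 E2 n ≤ a :=
  Real.sSup_le (fun _ ⟨G1, G2, hG2, hfree, hv⟩ => hv ▸ h G1 G2 hG2 hfree) ha

lemma eventually_lt_maxLubell [DecidableEq α] {r : ℕ} (hr : 0 < r) (hχ : r < (pairGraph E2).chromaticNumber)
    {a : ℝ} (ha : a < 2 - 1 / r) : ∀ᶠ n in atTop, a < maxLubell E1 E2 n := by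
  have hlim : Tendsto (fun n : ℕ => 2 - 1 / r * (n / (n - 1) : ℝ)) atTop (nhds (2 - 1 / r)) := by
    simpa [sub_eq_add_neg] using
      ((tendsto_natCast_div_add_atTop (-1 : ℝ)).const_mul (1 / r : ℝ)).const_sub 2
  filter_upwards [hlim.eventually (lt_mem_nhds ha), eventually_ge_atTop 2] with n han hn
  exact han.trans_le <| (two_sub_le_lubell_turanGraph hn r).trans <|
    lubell_le_maxLubell E1 (fun _ => card_eq_two_of_mem_edgePairs)
      (not_containsCopy_edgePairs_turanGraph hr hχ univ)

lemma eventually_maxLubell_lt [Fintype α] [DecidableEq α] (hE2 : ∀ e ∈ E2, #e = 2) {r : ℕ} (hr : 2 ≤ r)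
    (hcol : (pairGraph E2).Colorable (r + 1)) {a : ℝ} (ha : 2 - 1 / r < a) :
    ∀ᶠ n in atTop, maxLubell E1 E2 n < a := by
  have hr1 : (0 : ℝ) < 1 / r ∧ (1 : ℝ) / r ≤ 1 := by
    have : (1 : ℝ) ≤ r := by exact_mod_cast (show 1 ≤ r by omega)
    exact ⟨by positivity, div_le_one_of_le₀ this (by positivity)⟩
  set δ := min ((a - (2 - 1 / r)) / 2) (1 / r)
  have hδ : 0 < δ := lt_min (by linarith) hr1.1
  have hδa : 2 - 1 / r + δ < a := by linarith [min_le_left ((a - (2 - 1 / r)) / 2) (1 / r)]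
  filter_upwards [eventually_containsCopy_of_le_lubell E1 hE2 hr hcol hδ (min_le_right _ _)]
    with n hn
  refine (maxLubell_le E1 (by linarith) fun G1 G2 hG2 hfree => ?_).trans_lt hδa
  by_contra! h
  exact hfree (hn G1 G2 hG2 h.le)

lemma tendsto_maxLubell [Fintype α] [DecidableEq α] (hE2 : ∀ e ∈ E2, #e = 2) {r : ℕ} (hr : 2 ≤ r)
    (hχ : (pairGraph E2).chromaticNumber = (r + 1 : ℕ)) :
    Tendsto (maxLubell E1 E2) atTop (nhds (2 - 1 / r)) := by
  refine tendsto_order.2 ⟨fun a ha => eventually_lt_maxLubell E1 (by omega) ?_ ha,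
    fun a ha => eventually_maxLubell_lt E1 hE2 hr (chromaticNumber_le_iff_colorable.1 hχ.le) ha⟩
  rw [hχ]
  exact_mod_cast r.lt_succ_self

end MaxLubell

theorem turan_density_one_two_general (m t : ℕ) (ht : 3 ≤ t)
    (E1 : Finset (Fin m)) (E2 : Finset (Finset (Fin m))) (hE2 : ∀ e ∈ E2, e.card = 2)
    (H2 : SimpleGraph (Fin m))
    (hH2 : ∀ i j, H2.Adj i j ↔ i ≠ j ∧ ({i, j} : Finset (Fin m)) ∈ E2)
    (hchi : H2.chromaticNumber = t) :
    Tendsto (fun n : ℕ =>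
        sSup {v : ℝ | ∃ G1 : Finset (Fin n), ∃ G2 : Finset (Finset (Fin n)),
          (∀ e ∈ G2, e.card = 2) ∧
          (¬ ∃ f : Fin m → Fin n, Function.Injective f ∧
            (∀ i ∈ E1, f i ∈ G1) ∧ (∀ e ∈ E2, e.image f ∈ G2)) ∧
          v = (G1.card : ℝ) / n + (G2.card : ℝ) / (Nat.choose n 2 : ℝ)})
      atTop (nhds (2 - 1 / ((t : ℝ) - 1))) := by
  obtain rfl : H2 = pairGraph E2 := by
    ext i j
    exact hH2 i j
  obtain ⟨r, rfl⟩ : ∃ r, t = r + 1 := ⟨t - 1, by omega⟩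
  have hL : (2 : ℝ) - 1 / (((r + 1 : ℕ) : ℝ) - 1) = 2 - 1 / r := by push_cast; ring
  rw [hL]
  exact tendsto_maxLubell E1 hE2 (by omega) hchi

/-- Erdős–Stone–Simonovits for `{1,2}`-graphs: if the 2-level `H²` of a `{1,2}`-graph
`H` is not bipartite and has chromatic number `t ≥ 3`, then
`π(H) = lim_n max{h_n(G) : G ⊆ K_n^{{1,2}}, G is H-free} = 2 - 1/(t-1)`, where
`h_n(G) = |E(G¹)|/n + |E(G²)|/C(n,2)`. -/
theorem turan_density_one_two (m t : ℕ) (ht : 3 ≤ t)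
    (E1 : Finset (Fin m)) (E2 : Finset (Finset (Fin m))) (hE2 : ∀ e ∈ E2, e.card = 2)
    (H2 : SimpleGraph (Fin m))
    (hH2 : ∀ i j, H2.Adj i j ↔ i ≠ j ∧ ({i, j} : Finset (Fin m)) ∈ E2)
    (hnb : ¬ H2.Colorable 2)
    (hchi : H2.chromaticNumber = t) :
    Tendsto (fun n : ℕ =>
        sSup {v : ℝ | ∃ G1 : Finset (Fin n), ∃ G2 : Finset (Finset (Fin n)),
          (∀ e ∈ G2, e.card = 2) ∧
          (¬ ∃ f : Fin m → Fin n, Function.Injective f ∧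
            (∀ i ∈ E1, f i ∈ G1) ∧ (∀ e ∈ E2, e.image f ∈ G2)) ∧
          v = (G1.card : ℝ) / n + (G2.card : ℝ) / (Nat.choose n 2 : ℝ)})
      atTop (nhds (2 - 1 / ((t : ℝ) - 1))) :=
  turan_density_one_two_general m t ht E1 E2 hE2 H2 hH2 hchi
end
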